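/- Define ξ(λ) = 1 − (1 + Γ(2−λ)^{−1/λ}/λ)·e^{−Γ(2−λ)^{−1/λ}} for λ ∈ (0,1]. Then ξ has a unique zero λ* in (0,1]; moreover ξ(λ) < 0 for all 0 < λ < λ* and ξ(λ) > 0 for all λ* < λ ≤ 1. -/

import Mathlib

/-
Write `U(λ) = Γ(2-λ)^{-1/λ}` and `F(u) = (eᵘ - 1)/u`. Then `ξ(λ) = φ(λ) · (1 - e^{-U})/λ` with
`φ(λ) = λ - 1/F(U(λ))`, so it suffices to show that `φ` is strictly increasing on `(0,1]` and
changes sign there. Since `log U(λ)` is the slope of `log Γ` between `2 - λ` and `2`, convexity of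
`log Γ` makes `U` decreasing with `1 ≤ U ≤ Γ(5/2)² = 9π/16`, and convexity of
`π²x²/12 - log Γ x` on `[1, ∞)` (i.e. `(log Γ)'' ≤ ζ(2)` there, obtained through Euler's limit
formula) makes `U` Lipschitz with constant `3π³/64`. As `F` is convex with slope at most `2` on
`[1, 9/5]` and `F ≥ e - 1` there, `1/F(U(λ))` is Lipschitz with constant `2 · 3π³/64 / (e-1)² < 1`,
hence `φ` increases; finally `φ(1/4) < 0 < φ(1)`.
-/

open Real Set

/-- `ξ(λ) = 1 − (1 + Γ(2−λ)^{−1/λ}/λ)·e^{−Γ(2−λ)^{−1/λ}}` for `λ ∈ (0,1]`. -/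
noncomputable def xi (lam : ℝ) : ℝ :=
  1 - (1 + Real.Gamma (2 - lam) ^ (-(1 : ℝ) / lam) / lam) *
        Real.exp (-(Real.Gamma (2 - lam) ^ (-(1 : ℝ) / lam)))

open Filter Topology
open scoped Nat

theorem ConvexOn.of_tendsto {ι E : Type*} [AddCommMonoid E] [SMul ℝ E] {l : Filter ι} [l.NeBot]
    {s : Set E} {f : ι → E → ℝ} {g : E → ℝ} (hf : ∀ᶠ n in l, ConvexOn ℝ s (f n))
    (hg : ∀ x ∈ s, Tendsto (fun n ↦ f n x) l (𝓝 (g x))) : ConvexOn ℝ s g := by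
  refine ⟨hf.exists.choose_spec.1, fun x hx y hy a b ha hb hab ↦ ?_⟩
  refine le_of_tendsto_of_tendsto (hg _ (hf.exists.choose_spec.1 hx hy ha hb hab))
    (((hg x hx).const_mul a).add ((hg y hy).const_mul b)) ?_
  filter_upwards [hf] with n hn using hn.2 hx hy ha hb hab

noncomputable def expSlope (u : ℝ) : ℝ := (exp u - 1) / u

theorem expSlope_eq_slope (u : ℝ) : expSlope u = slope exp 0 u := by
  simp [expSlope, slope_def_field]

theorem expSlope_one : expSlope 1 = exp 1 - 1 := by simp [expSlope]

theorem monotoneOn_expSlope : MonotoneOn expSlope (Ioi 0) := by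
  intro a ha b hb hab
  simp only [expSlope_eq_slope]
  exact convexOn_exp.slope_mono (mem_univ 0) ⟨mem_univ a, ha.ne'⟩ ⟨mem_univ b, hb.ne'⟩ hab

theorem exp_one_sub_one_le_expSlope {u : ℝ} (hu : 1 ≤ u) : exp 1 - 1 ≤ expSlope u :=
  expSlope_one ▸ monotoneOn_expSlope (mem_Ioi.2 one_pos) (mem_Ioi.2 (one_pos.trans_le hu)) hu

theorem expSlope_pos {u : ℝ} (hu : 1 ≤ u) : 0 < expSlope u :=
  lt_of_lt_of_le (by linarith [add_one_le_exp 1]) (exp_one_sub_one_le_expSlope hu)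

theorem convexOn_expSlope : ConvexOn ℝ (Ioi 0) expSlope := by
  refine convexOn_of_hasDerivWithinAt2_nonneg (convex_Ioi 0)
    (f' := fun x ↦ (x * exp x - exp x + 1) / x ^ 2)
    (f'' := fun x ↦ (x ^ 2 * exp x - 2 * x * exp x + 2 * exp x - 2) / x ^ 3) ?_ ?_ ?_ ?_
  · exact fun x hx ↦ (((continuous_exp.sub continuous_const).continuousAt).div continuousAt_id
      (ne_of_gt hx)).continuousWithinAt
  all_goals rw [interior_Ioi]
  · intro x hx
    refine ((((hasDerivAt_exp x).sub_const 1).div (hasDerivAt_id x) (ne_of_gt hx)).congr_deriv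
      ?_).hasDerivWithinAt
    simp only [id]
    ring
  · intro x hx
    refine (((((hasDerivAt_id x).mul (hasDerivAt_exp x)).sub (hasDerivAt_exp x)).add_const 1).div
      (hasDerivAt_pow 2 x) (pow_ne_zero 2 (ne_of_gt hx))).congr_deriv ?_ |>.hasDerivWithinAt
    have : x ≠ 0 := ne_of_gt hx
    field_simp
    simp only [Pi.sub_apply, Pi.mul_apply, id]
    ring
  · intro x hx
    have hx : 0 < x := hx
    have hquad : 1 + x + x ^ 2 / 2 ≤ exp x := by
      have h := Real.sum_le_exp_of_nonneg hx.le 3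
      norm_num [Finset.sum_range_succ] at h
      linarith
    apply div_nonneg _ (by positivity)
    nlinarith [sq_nonneg x, sq_nonneg (x - 1)]

theorem exp_two_lt : exp 2 < 7.389057 := by
  have h := exp_one_lt_d9
  rw [show (2 : ℝ) = 1 + 1 by norm_num, exp_add]
  nlinarith [exp_pos 1]

theorem lt_exp_nine_fifths : 6.034 < exp (9 / 5) := by
  refine lt_of_lt_of_le ?_ (sum_le_exp_of_nonneg (by norm_num) 7)
  norm_num [Finset.sum_range_succ, Nat.factorial]

theorem slope_expSlope_le_two : slope expSlope 2 (9 / 5) ≤ 2 := by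
  rw [slope_def_field, expSlope, expSlope]
  norm_num
  linarith [exp_two_lt, lt_exp_nine_fifths]

theorem expSlope_sub_expSlope_le {u v : ℝ} (hv : 0 < v) (hvu : v ≤ u) (hu : u ≤ 9 / 5) :
    expSlope u - expSlope v ≤ 2 * (u - v) := by
  obtain rfl | hvu := hvu.eq_or_lt
  · simp
  have h₁ : slope expSlope v u ≤ slope expSlope v 2 :=
    convexOn_expSlope.slope_mono hv ⟨hv.trans hvu, hvu.ne'⟩
      ⟨mem_Ioi.2 two_pos, ne_of_gt (by linarith)⟩ (by linarith)
  have h₂ : slope expSlope 2 v ≤ slope expSlope 2 (9 / 5) :=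
    convexOn_expSlope.slope_mono (mem_Ioi.2 two_pos) ⟨hv, ne_of_lt (by linarith)⟩
      ⟨by norm_num, by norm_num⟩ (by linarith)
  rw [slope_comm expSlope v 2] at h₁
  have := (h₁.trans h₂).trans slope_expSlope_le_two
  rw [slope_def_field, div_le_iff₀ (by linarith)] at this
  linarith

theorem inv_expSlope_sub_inv_le {u v : ℝ} (hv : 1 ≤ v) (hvu : v ≤ u) (hu : u ≤ 9 / 5) :
    (expSlope v)⁻¹ - (expSlope u)⁻¹ ≤ 2 * (u - v) / (exp 1 - 1) ^ 2 := by
  have he : 0 < exp 1 - 1 := by linarith [add_one_le_exp 1]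
  have hFv := exp_one_sub_one_le_expSlope hv
  have hFu := exp_one_sub_one_le_expSlope (hv.trans hvu)
  rw [inv_sub_inv (by linarith) (by linarith), sq]
  calc _ ≤ 2 * (u - v) / (expSlope v * expSlope u) :=
        div_le_div_of_nonneg_right (expSlope_sub_expSlope_le (by linarith) hvu hu)
          (mul_pos (by linarith) (by linarith)).le
    _ ≤ _ := div_le_div_of_nonneg_left (by linarith) (mul_pos he he)
        (mul_le_mul hFv hFu he.le (by linarith))

theorem log_GammaSeq {x : ℝ} (hx : 0 < x) {n : ℕ} (hn : n ≠ 0) :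
    log (GammaSeq x n) = x * log n + log n ! - ∑ j ∈ Finset.range (n + 1), log (x + j) := by
  have hprod : ∀ j ∈ Finset.range (n + 1), x + j ≠ 0 := fun j _ ↦ by positivity
  rw [GammaSeq, log_div (by positivity) (Finset.prod_ne_zero_iff.2 hprod),
    log_mul (by positivity) (by positivity), log_rpow (by positivity), log_prod hprod]

theorem sum_range_inv_sq_le (m : ℕ) : ∑ j ∈ Finset.range m, ((j + 1 : ℝ) ^ 2)⁻¹ ≤ π ^ 2 / 6 := by
  refine le_trans (le_of_eq ?_) (sum_le_hasSum ((Finset.range m).map (addRightEmbedding 1))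
    (fun n _ ↦ by positivity) hasSum_zeta_two)
  simp [Finset.sum_map]

theorem convexOn_sq_sub_log_GammaSeq {n : ℕ} (hn : n ≠ 0) :
    ConvexOn ℝ (Ici 1) fun x ↦ π ^ 2 / 12 * x ^ 2 - log (GammaSeq x n) := by
  refine ConvexOn.congr (f := fun x ↦ π ^ 2 / 12 * x ^ 2 -
      (x * log n + log n ! - ∑ j ∈ Finset.range (n + 1), log (x + j))) ?_
    (fun x hx ↦ by rw [log_GammaSeq (one_pos.trans_le hx) hn])
  have hpos {x : ℝ} (hx : x ∈ interior (Ici 1)) (j : ℕ) : 0 < x + j := by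
    rw [interior_Ici] at hx
    have : (1 : ℝ) < x := hx
    positivity
  refine convexOn_of_hasDerivWithinAt2_nonneg (convex_Ici 1)
    (f' := fun x ↦ π ^ 2 / 6 * x - (log n - ∑ j ∈ Finset.range (n + 1), (x + j)⁻¹))
    (f'' := fun x ↦ π ^ 2 / 6 - ∑ j ∈ Finset.range (n + 1), ((x + j) ^ 2)⁻¹) ?_ ?_ ?_ ?_
  · refine ContinuousOn.sub (by fun_prop) (ContinuousOn.sub (by fun_prop) ?_)
    refine continuousOn_finsetSum _ fun j _ ↦ ContinuousOn.log (by fun_prop) fun x hx ↦ ?_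
    have : (1 : ℝ) ≤ x := hx
    positivity
  · intro x hx
    have := (((hasDerivAt_pow 2 x).const_mul (π ^ 2 / 12)).sub
      ((((hasDerivAt_id x).mul_const (log n)).add_const (log n !)).sub
        (HasDerivAt.fun_sum (u := Finset.range (n + 1)) fun j _ ↦
          ((hasDerivAt_id x).add_const (j : ℝ)).log (hpos hx j).ne')))
    refine (this.congr_deriv ?_).hasDerivWithinAt
    simp only [id, one_div]
    ring
  · intro x hx
    have := ((hasDerivAt_id x).const_mul (π ^ 2 / 6)).sub ((hasDerivAt_const x (log n)).sub
      (HasDerivAt.fun_sum (u := Finset.range (n + 1)) fun j _ ↦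
        ((hasDerivAt_id x).add_const (j : ℝ)).inv (hpos hx j).ne'))
    refine (this.congr_deriv ?_).hasDerivWithinAt
    simp only [id, neg_div, Finset.sum_neg_distrib, one_div]
    ring
  · intro x hx
    have hx1 : (1 : ℝ) < x := by rwa [interior_Ici] at hx
    have : ∑ j ∈ Finset.range (n + 1), ((x + j) ^ 2)⁻¹ ≤
        ∑ j ∈ Finset.range (n + 1), ((j + 1 : ℝ) ^ 2)⁻¹ :=
      Finset.sum_le_sum fun j _ ↦
        inv_anti₀ (by positivity) (pow_le_pow_left₀ (by positivity) (by linarith) 2)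
    linarith [sum_range_inv_sq_le (n + 1)]

theorem convexOn_sq_sub_log_Gamma :
    ConvexOn ℝ (Ici 1) fun x ↦ π ^ 2 / 12 * x ^ 2 - log (Gamma x) :=
  ConvexOn.of_tendsto ((eventually_ne_atTop 0).mono fun _ ↦ convexOn_sq_sub_log_GammaSeq)
    fun x hx ↦ tendsto_const_nhds.sub <| ((continuousAt_log
      (Gamma_pos_of_pos (one_pos.trans_le hx)).ne').tendsto).comp (GammaSeq_tendsto_Gamma x)

noncomputable def logGammaSlope (l : ℝ) : ℝ := slope (log ∘ Gamma) 2 (2 - l)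

theorem two_sub_mem_Ici_of_mem_Ioc {l : ℝ} (hl : l ∈ Ioc 0 1) : 2 - l ∈ Ici 1 \ {2} :=
  ⟨show 1 ≤ 2 - l by linarith [hl.2], by simpa using hl.1.ne'⟩

theorem two_sub_mem_Ioi_of_mem_Ioc {l : ℝ} (hl : l ∈ Ioc 0 1) : 2 - l ∈ Ioi 0 \ {2} :=
  ⟨show 0 < 2 - l by linarith [hl.2], by simpa using hl.1.ne'⟩

theorem logGammaSlope_antitoneOn : AntitoneOn logGammaSlope (Ioc 0 1) := fun _ ha _ hb hab ↦
  convexOn_log_Gamma.slope_mono (mem_Ioi.2 two_pos) (two_sub_mem_Ioi_of_mem_Ioc hb)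
    (two_sub_mem_Ioi_of_mem_Ioc ha) (by linarith)

theorem logGammaSlope_one : logGammaSlope 1 = 0 := by
  norm_num [logGammaSlope, slope_def_field]

theorem logGammaSlope_nonneg {l : ℝ} (hl : l ∈ Ioc 0 1) : 0 ≤ logGammaSlope l :=
  logGammaSlope_one ▸ logGammaSlope_antitoneOn hl ⟨one_pos, le_rfl⟩ hl.2

theorem logGammaSlope_le {l : ℝ} (hl : l ∈ Ioc 0 1) :
    logGammaSlope l ≤ 2 * log (Gamma (5 / 2)) := by
  refine (convexOn_log_Gamma.slope_mono (mem_Ioi.2 two_pos) (two_sub_mem_Ioi_of_mem_Ioc hl)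
    (show (5 / 2 : ℝ) ∈ Ioi 0 \ {2} by norm_num) (by linarith [hl.1])).trans_eq ?_
  norm_num [slope_def_field]
  ring

theorem logGammaSlope_sub_le {l₁ l₂ : ℝ} (h₁ : l₁ ∈ Ioc 0 1) (h₂ : l₂ ∈ Ioc 0 1) (hl : l₁ ≤ l₂) :
    logGammaSlope l₁ - logGammaSlope l₂ ≤ π ^ 2 / 12 * (l₂ - l₁) := by
  have hslope {l : ℝ} (hl : l ≠ 0) :
      slope (fun x ↦ π ^ 2 / 12 * x ^ 2 - log (Gamma x)) 2 (2 - l) =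
        π ^ 2 / 12 * (4 - l) - logGammaSlope l := by
    simp only [logGammaSlope, slope_def_field, Function.comp, Gamma_two, log_one,
      show (2 - l) - 2 = -l by ring]
    field_simp
    ring
  have h := convexOn_sq_sub_log_Gamma.slope_mono (by norm_num) (two_sub_mem_Ici_of_mem_Ioc h₂)
    (two_sub_mem_Ici_of_mem_Ioc h₁) (by linarith)
  rw [hslope h₁.1.ne', hslope h₂.1.ne'] at h
  linarith

noncomputable def gammaRoot (l : ℝ) : ℝ := Gamma (2 - l) ^ (-(1 : ℝ) / l)

theorem gammaRoot_eq_exp {l : ℝ} (hl : l < 2) : gammaRoot l = exp (logGammaSlope l) := by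
  rw [gammaRoot, rpow_def_of_pos (Gamma_pos_of_pos (by linarith)), logGammaSlope,
    slope_def_field]
  simp only [Function.comp, Gamma_two, log_one]
  ring_nf

theorem one_le_gammaRoot {l : ℝ} (hl : l ∈ Ioc 0 1) : 1 ≤ gammaRoot l := by
  rw [gammaRoot_eq_exp (by linarith [hl.2])]
  exact one_le_exp (logGammaSlope_nonneg hl)

theorem Gamma_five_halves : Gamma (5 / 2) = 3 / 4 * √π := by
  rw [show (5 / 2 : ℝ) = 1 / 2 + 1 + 1 by norm_num, Gamma_add_one (by norm_num),
    Gamma_add_one (by norm_num), Gamma_one_half_eq]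
  ring

theorem gammaRoot_le {l : ℝ} (hl : l ∈ Ioc 0 1) : gammaRoot l ≤ 9 * π / 16 := by
  have hG : Gamma (5 / 2) ^ 2 = 9 * π / 16 := by
    rw [Gamma_five_halves, mul_pow, sq_sqrt pi_pos.le]
    ring
  rw [gammaRoot_eq_exp (by linarith [hl.2]), ← hG, ← exp_log (Gamma_pos_of_pos (by norm_num) :
    0 < Gamma (5 / 2)), ← exp_nat_mul]
  exact exp_le_exp.2 (by exact_mod_cast logGammaSlope_le hl)

theorem gammaRoot_antitoneOn : AntitoneOn gammaRoot (Ioc 0 1) := fun a ha b hb hab ↦ by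
  rw [gammaRoot_eq_exp (l := a) (by linarith [ha.2]),
    gammaRoot_eq_exp (l := b) (by linarith [hb.2])]
  exact exp_le_exp.2 (logGammaSlope_antitoneOn ha hb hab)

theorem exp_sub_exp_le_exp_mul (a b : ℝ) : exp a - exp b ≤ exp a * (a - b) := by
  have h : exp a * (1 + (b - a)) ≤ exp b := by
    rw [show b = a + (b - a) by ring, exp_add, add_sub_cancel_left]
    exact mul_le_mul_of_nonneg_left (by linarith [add_one_le_exp (b - a)]) (exp_pos a).le
  linarith

theorem gammaRoot_sub_le {l₁ l₂ : ℝ} (h₁ : l₁ ∈ Ioc 0 1) (h₂ : l₂ ∈ Ioc 0 1) (hl : l₁ ≤ l₂) :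
    gammaRoot l₁ - gammaRoot l₂ ≤ 3 * π ^ 3 / 64 * (l₂ - l₁) := by
  have hexp := exp_sub_exp_le_exp_mul (logGammaSlope l₁) (logGammaSlope l₂)
  rw [← gammaRoot_eq_exp (by linarith [h₁.2]), ← gammaRoot_eq_exp (by linarith [h₂.2])] at hexp
  calc gammaRoot l₁ - gammaRoot l₂
      ≤ gammaRoot l₁ * (logGammaSlope l₁ - logGammaSlope l₂) := hexp
    _ ≤ 9 * π / 16 * (π ^ 2 / 12 * (l₂ - l₁)) :=
      mul_le_mul (gammaRoot_le h₁) (logGammaSlope_sub_le h₁ h₂ hl)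
        (sub_nonneg.2 (logGammaSlope_antitoneOn h₁ h₂ hl)) (by positivity)
    _ = 3 * π ^ 3 / 64 * (l₂ - l₁) := by ring

noncomputable def phi (l : ℝ) : ℝ := l - (expSlope (gammaRoot l))⁻¹

theorem phi_strictMonoOn : StrictMonoOn phi (Ioc 0 1) := by
  intro l₁ h₁ l₂ h₂ hl
  have hroot := gammaRoot_sub_le h₁ h₂ hl.le
  have hinv := inv_expSlope_sub_inv_le (one_le_gammaRoot h₂) (gammaRoot_antitoneOn h₁ h₂ hl.le)
    ((gammaRoot_le h₁).trans (by linarith [pi_lt_d2]))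
  have he : 2.7182818283 < exp 1 := exp_one_gt_d9
  have hnum : 2 * (3 * π ^ 3 / 64) < (exp 1 - 1) ^ 2 := by
    have : π ^ 3 < 3.1416 ^ 3 := pow_lt_pow_left₀ pi_lt_d4 pi_pos.le (by norm_num)
    nlinarith
  have : (expSlope (gammaRoot l₂))⁻¹ - (expSlope (gammaRoot l₁))⁻¹ < l₂ - l₁ :=
    calc _ ≤ 2 * (gammaRoot l₁ - gammaRoot l₂) / (exp 1 - 1) ^ 2 := hinv
      _ ≤ 2 * (3 * π ^ 3 / 64 * (l₂ - l₁)) / (exp 1 - 1) ^ 2 := by gcongr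
      _ < l₂ - l₁ := by
        rw [div_lt_iff₀ (pow_pos (by linarith) 2)]
        nlinarith [sub_pos.2 hl]
  simp only [phi]
  linarith

theorem continuousOn_gammaRoot : ContinuousOn gammaRoot (Ioc 0 1) := by
  refine ContinuousOn.rpow (fun l hl ↦ ?_) (by fun_prop (disch := exact fun l hl ↦ hl.1.ne'))
    fun l hl ↦ Or.inl (Gamma_pos_of_pos (by linarith [hl.2])).ne'
  refine ((differentiableAt_Gamma fun m ↦ ?_).continuousAt.comp (by fun_prop)).continuousWithinAt
  linarith [hl.2, (Nat.cast_nonneg m : (0 : ℝ) ≤ m)]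

theorem continuousOn_phi : ContinuousOn phi (Ioc 0 1) := by
  have hexpSlope : ContinuousOn expSlope (Ioi 0) := by
    unfold expSlope
    fun_prop (disch := exact fun u hu ↦ hu.ne')
  refine continuousOn_id.sub (ContinuousOn.inv₀ ?_ fun l hl ↦
    (expSlope_pos (one_le_gammaRoot hl)).ne')
  exact hexpSlope.comp continuousOn_gammaRoot fun l hl ↦ one_pos.trans_le (one_le_gammaRoot hl)

theorem phi_one_fourth_neg : phi (1 / 4) < 0 := by
  have hl : (1 / 4 : ℝ) ∈ Ioc 0 1 := by norm_num
  have hF : expSlope (gammaRoot (1 / 4)) ≤ expSlope 2 :=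
    monotoneOn_expSlope (one_pos.trans_le (one_le_gammaRoot hl)) (mem_Ioi.2 two_pos)
      ((gammaRoot_le hl).trans (by linarith [pi_lt_d2]))
  have hF2 : expSlope 2 < 4 := by
    rw [expSlope]
    linarith [exp_two_lt]
  have := expSlope_pos (one_le_gammaRoot hl)
  rw [phi, sub_neg, lt_inv_comm₀ (by norm_num) this]
  linarith

theorem phi_one_pos : 0 < phi 1 := by
  have hroot : gammaRoot 1 = 1 := by norm_num [gammaRoot]
  rw [phi, hroot, expSlope_one, sub_pos, inv_lt_one₀ (by linarith [add_one_le_exp 1])]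
  linarith [exp_one_gt_d9]

theorem one_sub_add_div_mul_exp_neg {u l : ℝ} (hu : u ≠ 0) (hl : l ≠ 0) :
    1 - (1 + u / l) * exp (-u) = (l - (expSlope u)⁻¹) * ((1 - exp (-u)) / l) := by
  have : exp u - 1 ≠ 0 := sub_ne_zero.2 (by simpa using hu)
  rw [expSlope, inv_div, exp_neg]
  field_simp
  ring

theorem xi_eq_phi_mul {l : ℝ} (hl : l ∈ Ioc 0 1) : ∃ c > 0, xi l = phi l * c := by
  have hu := one_le_gammaRoot hl
  refine ⟨(1 - exp (-gammaRoot l)) / l,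
    div_pos (sub_pos.2 (exp_lt_one_iff.2 (by linarith))) hl.1,
    one_sub_add_div_mul_exp_neg (by linarith : (0 : ℝ) < gammaRoot l).ne' hl.1.ne'⟩

/-- The quantity `ξ(λ)` has a unique zero `λ*` in `(0,1]`; moreover `ξ(λ) < 0` for
`0 < λ < λ*` and `ξ(λ) > 0` for `λ* < λ ≤ 1`. -/
theorem xi_unique_zero :
    ∃ lamstar : ℝ, lamstar ∈ Set.Ioc (0 : ℝ) 1 ∧ xi lamstar = 0 ∧
      (∀ lam ∈ Set.Ioc (0 : ℝ) 1, xi lam = 0 → lam = lamstar) ∧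
      (∀ lam : ℝ, 0 < lam → lam < lamstar → xi lam < 0) ∧
      (∀ lam : ℝ, lamstar < lam → lam ≤ 1 → 0 < xi lam) := by
  have hsub : Icc (1 / 4 : ℝ) 1 ⊆ Ioc 0 1 := fun l hl ↦ ⟨by linarith [hl.1], hl.2⟩
  obtain ⟨lamstar, hmem, hzero⟩ := intermediate_value_Icc (by norm_num)
    (continuousOn_phi.mono hsub) ⟨phi_one_fourth_neg.le, phi_one_pos.le⟩
  have hstar := hsub hmem
  refine ⟨lamstar, hstar, ?_, fun l hl h ↦ ?_, fun l h₀ hl ↦ ?_, fun l hl h₁ ↦ ?_⟩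
  · obtain ⟨c, -, hxi⟩ := xi_eq_phi_mul hstar
    rw [hxi, hzero, zero_mul]
  · obtain ⟨c, hc, hxi⟩ := xi_eq_phi_mul hl
    rw [hxi, mul_eq_zero_iff_right hc.ne', ← hzero] at h
    exact phi_strictMonoOn.injOn hl hstar h
  · have hl' : l ∈ Ioc 0 1 := ⟨h₀, hl.le.trans hstar.2⟩
    obtain ⟨c, hc, hxi⟩ := xi_eq_phi_mul hl'
    rw [hxi]
    exact mul_neg_of_neg_of_pos (hzero ▸ phi_strictMonoOn hl' hstar hl) hc
  · have hl' : l ∈ Ioc 0 1 := ⟨hstar.1.trans hl, h₁⟩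
    obtain ⟨c, hc, hxi⟩ := xi_eq_phi_mul hl'
    rw [hxi]
    exact mul_pos (hzero ▸ phi_strictMonoOn hstar hl' hl) hc
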